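/- arXiv:2308.03857 — 3 statements merged into one kernel-verified Lean document; each statement's English description precedes it below -/
import Mathlib

section
/- The characteristic polynomial of the mk×mk block replacement matrix A (as defined via blocks H_k, H'_k, I_k) equals (-1-λ)^{k-1}·(mτ₀ - m - 1 - λ)·∏_{r=2}^{m}(-r-λ)^k; hence the eigenvalues of A are mτ₀ - m - 1 (simple, provided mτ₀ - m - 1 ≠ -1, -2, ..., -m), -1 with multiplicity k-1, and -r with multiplicity k for each r = 2, ..., m. -/
/-- The `k×k` matrix `H_k`: its row `a` is `m(n_1,...,n_k) - m e_a - m e_i`. -/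
def hookH (m k : ℕ) (i : Fin k) (n : Fin k → ℕ) : Matrix (Fin k) (Fin k) ℝ :=
  fun a b =>
    (m : ℝ) * n b - (if b = a then (m : ℝ) else 0) - (if b = i then (m : ℝ) else 0)

/-- The `mk×mk` block replacement matrix `A` of the `m`-ary hooking network. -/
def hookA (m k : ℕ) (i : Fin k) (n : Fin k → ℕ) :
    Matrix (Fin m × Fin k) (Fin m × Fin k) ℝ :=
  fun x y =>
    if (y.1 : ℕ) = 0 then
      hookH m k i n x.2 y.2 + (if (x.1 : ℕ) ≠ 0 ∧ x.2 = y.2 then (m : ℝ) else 0)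
    else if (y.1 : ℕ) = (x.1 : ℕ) then
      (if x.2 = y.2 then -((m : ℝ) - (x.1 : ℕ)) else 0)
    else if (y.1 : ℕ) = (x.1 : ℕ) + 1 then
      (if x.2 = y.2 then (m : ℝ) - 1 - (x.1 : ℕ) else 0)
    else 0


open Matrix Finset

section Aux

/-- The upper-bidiagonal matrix `T = C - λI`. -/
def Tm (m : ℕ) (lam : ℝ) : Matrix (Fin m) (Fin m) ℝ :=
  fun p q => if p = q then -((m : ℝ) - (p : ℕ)) - lam
    else if (q : ℕ) = (p : ℕ) + 1 then (m : ℝ) - 1 - (p : ℕ) else 0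

/-- Reversed form of `T` with first column replaced by ones (placed as last column). -/
def Wm (s : ℕ) (lam : ℝ) : Matrix (Fin s) (Fin s) ℝ :=
  fun p q => if (q : ℕ) = s - 1 then 1
    else if p = q then -((q : ℕ) + 1 : ℝ) - lam
    else if (p : ℕ) = (q : ℕ) + 1 then ((q : ℕ) + 1 : ℝ) else 0

lemma sum_indicator_fin (m t : ℕ) (c : ℝ) :
    (∑ q : Fin m, if (q : ℕ) = t then c else 0) = if t < m then c else 0 := by
  by_cases h : t < m
  · rw [if_pos h, Finset.sum_eq_single (⟨t, h⟩ : Fin m)]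
    · simp
    · intro b _ hb
      simp only [ite_eq_right_iff]
      intro hbt; exact absurd (Fin.ext hbt) hb
    · simp
  · rw [if_neg h]
    apply Finset.sum_eq_zero
    intro q _
    have := q.isLt
    rw [if_neg]; omega

lemma Tm_rowsum (m : ℕ) (lam : ℝ) (p : Fin m) :
    ∑ q, Tm m lam p q = -1 - lam := by
  have hsplit : ∀ q : Fin m, Tm m lam p q =
      (if q = p then -((m : ℝ) - (p : ℕ)) - lam else 0) +
      (if (q : ℕ) = (p : ℕ) + 1 then (m : ℝ) - 1 - (p : ℕ) else 0) := by
    intro q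
    unfold Tm
    by_cases h : p = q
    · subst h
      have : ¬((p : ℕ) = (p : ℕ) + 1) := by omega
      simp [this]
    · rw [if_neg h, if_neg (Ne.symm h), zero_add]
  rw [Finset.sum_congr rfl fun q _ => hsplit q, Finset.sum_add_distrib,
    Finset.sum_ite_eq' Finset.univ p _, if_pos (Finset.mem_univ p),
    sum_indicator_fin]
  have hp := p.isLt
  by_cases h : (p : ℕ) + 1 < m
  · rw [if_pos h]; ring
  · rw [if_neg h]
    have : (p : ℕ) = m - 1 := by omega
    rw [this]
    have h1 : ((m - 1 : ℕ) : ℝ) = (m : ℝ) - 1 := by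
      have : 1 ≤ m := by omega
      push_cast [this]; ring
    rw [h1]; ring


/-- Adding all other columns to column 0 preserves the determinant. -/
lemma det_updateColumn_rowsum (s : ℕ) (hs : 1 ≤ s) (M : Matrix (Fin s) (Fin s) ℝ) :
    Matrix.det (M.updateCol ⟨0, hs⟩ (fun p => ∑ q, M p q)) = M.det := by
  classical
  set K : Matrix (Fin s) (Fin s) ℝ :=
    fun a b => if (b : ℕ) = 0 then 1 else if a = b then 1 else 0 with hK
  have hMK : M * K = M.updateCol ⟨0, hs⟩ (fun p => ∑ q, M p q) := by
    ext p c
    rw [Matrix.mul_apply, Matrix.updateCol_apply]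
    by_cases hc : c = ⟨0, hs⟩
    · subst hc
      simp only [hK, Fin.val_mk, if_pos rfl, mul_one]
      simp
    · have hc' : ¬((c : ℕ) = 0) := fun h => hc (Fin.ext h)
      rw [if_neg hc]
      simp only [hK, hc', if_false, mul_ite, mul_one, mul_zero]
      rw [Finset.sum_ite_eq' Finset.univ c _, if_pos (Finset.mem_univ c)]
  have hdetK : K.det = 1 := by
    have htri : K.BlockTriangular OrderDual.toDual := by
      intro a b hab
      have hab' : (b : ℕ) > (a : ℕ) := hab
      simp only [hK]
      rw [if_neg (by omega), if_neg (by exact fun h => by subst h; omega)]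
    rw [Matrix.det_of_lowerTriangular K htri]
    apply Finset.prod_eq_one
    intro a _
    simp [hK]
  rw [← hMK, Matrix.det_mul, hdetK, mul_one]

lemma prod_shift (s : ℕ) (lam : ℝ) :
    (∏ q : Fin s, (-((q : ℕ) + 1 : ℝ) - lam)) = ∏ r ∈ Finset.Icc 1 s, (-(r : ℝ) - lam) := by
  rw [Fin.prod_univ_eq_prod_range (fun j => (-((j : ℕ) + 1 : ℝ) - lam))]
  induction s with
  | zero => simp
  | succ t ih =>
      rw [Finset.prod_range_succ, ih, Finset.prod_Icc_succ_top (by omega : 1 ≤ t + 1)]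
      push_cast; ring




lemma Wm_rec (m : ℕ) (hm : 1 ≤ m) (lam : ℝ) :
    (Wm (m + 1) lam).det =
      -(m : ℝ) * (Wm m lam).det + ∏ r ∈ Finset.Icc 1 m, (-(r : ℝ) - lam) := by
  set A := Wm (m + 1) lam with hA
  set jm1 : Fin (m + 1) := ⟨m - 1, by omega⟩ with hjm1
  rw [Matrix.det_succ_row A (Fin.last m)]
  rw [← Finset.sum_subset (Finset.subset_univ ({jm1, Fin.last m} : Finset (Fin (m + 1))))]
  · rw [Finset.sum_insert (by
      simp only [Finset.mem_singleton]
      intro h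
      have := congrArg Fin.val h
      rw [Fin.val_last] at this
      have : m - 1 = m := this
      omega), Finset.sum_singleton]
    have hAlast : A (Fin.last m) (Fin.last m) = 1 := by
      rw [hA]; simp only [Wm]
      rw [if_pos (by rw [Fin.val_last]; omega)]
    have hAjm1 : A (Fin.last m) jm1 = (m : ℝ) := by
      have h1 : ¬((jm1 : ℕ) = (m + 1) - 1) := by show ¬(m - 1 = m + 1 - 1); omega
      have h2 : ¬(Fin.last m = jm1) := by
        intro h
        have : m = m - 1 := congrArg Fin.val h
        omega
      have h3 : (Fin.last m : ℕ) = (jm1 : ℕ) + 1 := by show m = (m - 1) + 1; omega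
      rw [hA]; simp only [Wm]
      rw [if_neg h1, if_neg h2, if_pos h3]
      have hv : ((jm1 : ℕ) : ℝ) = ((m - 1 : ℕ) : ℝ) := rfl
      rw [hv, Nat.cast_sub hm]
      push_cast; ring
    have hminorlast :
        (A.submatrix (Fin.last m).succAbove (Fin.last m).succAbove).det =
          ∏ r ∈ Finset.Icc 1 m, (-(r : ℝ) - lam) := by
      rw [Fin.succAbove_last]
      have htri : (A.submatrix Fin.castSucc Fin.castSucc).BlockTriangular OrderDual.toDual := by
        intro p q hpq
        have hpq' : (p : ℕ) < (q : ℕ) := hpq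
        have hq := q.isLt
        simp only [Matrix.submatrix_apply, hA, Wm, Fin.coe_castSucc]
        rw [if_neg (by omega), if_neg (by
          intro h
          have := congrArg Fin.val h
          simp only [Fin.coe_castSucc] at this
          omega), if_neg (by omega)]
      rw [Matrix.det_of_lowerTriangular _ htri, ← prod_shift m lam]
      apply Finset.prod_congr rfl
      intro q _
      have hq := q.isLt
      simp only [Matrix.submatrix_apply, hA, Wm, Fin.coe_castSucc]
      rw [if_neg (by omega)]
      simp
    have hminorjm1 : A.submatrix (Fin.last m).succAbove jm1.succAbove = Wm m lam := by
      ext p q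
      have hp := p.isLt
      have hq := q.isLt
      rw [Fin.succAbove_last]
      by_cases hql : (q : ℕ) < m - 1
      · have hcast : jm1.succAbove q = q.castSucc := by
          rw [Fin.succAbove, if_pos]
          exact hql
        rw [Matrix.submatrix_apply, hcast, hA]
        simp only [Wm, Fin.coe_castSucc, Fin.castSucc_inj]
        have c1 : ¬((q : ℕ) = (m + 1) - 1) := by omega
        have c2 : ¬((q : ℕ) = m - 1) := by omega
        rw [if_neg c1, if_neg c2]
      · have hqe : (q : ℕ) = m - 1 := by omega
        have hcast : jm1.succAbove q = q.succ := by
          rw [Fin.succAbove, if_neg]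
          exact hql
        rw [Matrix.submatrix_apply, hcast, hA]
        simp only [Wm, Fin.val_succ]
        have c1 : ((q : ℕ) + 1 = (m + 1) - 1) := by omega
        have c2 : ((q : ℕ) = m - 1) := by omega
        rw [if_pos c1, if_pos c2]
    rw [hminorlast, hAlast, hAjm1, hminorjm1]
    have hs1 : ((-1 : ℝ)) ^ ((Fin.last m : ℕ) + (jm1 : ℕ)) = -1 := by
      have hv : (Fin.last m : ℕ) + (jm1 : ℕ) = m + (m - 1) := rfl
      rw [hv]
      have hmod : (m + (m - 1)) % 2 = 1 := by omega
      rw [← Nat.div_add_mod (m + (m - 1)) 2, pow_add, pow_mul, neg_one_sq, one_pow, hmod]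
      norm_num
    have hs2 : ((-1 : ℝ)) ^ ((Fin.last m : ℕ) + (Fin.last m : ℕ)) = 1 := by
      have hv : (Fin.last m : ℕ) + (Fin.last m : ℕ) = 2 * m := by rw [Fin.val_last]; omega
      rw [hv, pow_mul, neg_one_sq, one_pow]
    rw [hs1, hs2]
    ring
  · intro j _ hj
    simp only [Finset.mem_insert, Finset.mem_singleton, not_or] at hj
    obtain ⟨hj1, hj2⟩ := hj
    have hjv := j.isLt
    have h1 : ¬((j : ℕ) = (m + 1) - 1) := by
      intro h
      exact hj2 (Fin.ext (by rw [Fin.val_last]; omega))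
    have h2 : ¬(Fin.last m = j) := fun h => hj2 h.symm
    have h3 : ¬((Fin.last m : ℕ) = (j : ℕ) + 1) := by
      rw [Fin.val_last]
      intro h
      exact hj1 (Fin.ext (show (j : ℕ) = (jm1 : ℕ) by show _ = m - 1; omega))
    have hz : A (Fin.last m) j = 0 := by
      rw [hA]; simp only [Wm]
      rw [if_neg h1, if_neg h2, if_neg h3]
    rw [hz]; ring

lemma Wm_det (m : ℕ) (hm : 1 ≤ m) (lam : ℝ) :
    (Wm m lam).det = ∏ r ∈ Finset.Icc 2 m, (-(r : ℝ) - lam) := by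
  induction m with
  | zero => omega
  | succ t ih =>
      rcases Nat.lt_or_ge t 1 with ht | ht
      · interval_cases t
        rw [show (Finset.Icc 2 1 : Finset ℕ) = ∅ by rfl, Finset.prod_empty]
        rw [Matrix.det_fin_one]
        simp [Wm]
      · rw [Wm_rec t ht lam, ih ht]
        rw [Finset.prod_Icc_succ_top (by omega : 2 ≤ t + 1)]
        have hsplit : (∏ r ∈ Finset.Icc 1 t, (-(r : ℝ) - lam)) =
            (-1 - lam) * ∏ r ∈ Finset.Icc 2 t, (-(r : ℝ) - lam) := by
          rw [show Finset.Icc 1 t = insert 1 (Finset.Icc 2 t) by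
            ext x; simp [Finset.mem_Icc]; omega]
          rw [Finset.prod_insert (by simp [Finset.mem_Icc])]
          norm_num
        rw [hsplit]
        push_cast; ring

lemma TW (m : ℕ) (hm : 1 ≤ m) (lam : ℝ) :
    (Tm m lam).updateCol ⟨0, hm⟩ (fun _ => (1 : ℝ)) =
      (Wm m lam).submatrix Fin.rev Fin.rev := by
  ext p q
  have hp := p.isLt
  have hq := q.isLt
  have h0 : ((⟨0, hm⟩ : Fin m) : ℕ) = 0 := rfl
  rw [Matrix.updateCol_apply, Matrix.submatrix_apply]
  by_cases hq0 : q = ⟨0, hm⟩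
  · subst hq0
    rw [if_pos rfl]
    simp only [Wm, Fin.val_rev]
    simp
  · have hq0' : (q : ℕ) ≠ 0 := fun h => hq0 (Fin.ext h)
    rw [if_neg hq0]
    simp only [Wm, Tm, Fin.val_rev]
    rw [if_neg (by omega : ¬(m - ((q : ℕ) + 1) = m - 1))]
    by_cases hpq : p = q
    · subst hpq
      rw [if_pos rfl, if_pos rfl]
      rw [Nat.cast_sub (by omega : (p : ℕ) + 1 ≤ m)]
      push_cast; ring
    · rw [if_neg hpq, if_neg (fun h => hpq (Fin.rev_inj.mp h))]
      by_cases hsq : (q : ℕ) = (p : ℕ) + 1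
      · rw [if_pos hsq, if_pos (by omega : m - ((p : ℕ) + 1) = m - ((q : ℕ) + 1) + 1)]
        rw [Nat.cast_sub (by omega : (q : ℕ) + 1 ≤ m)]
        push_cast [hsq]; ring
      · rw [if_neg hsq, if_neg (by omega : ¬(m - ((p : ℕ) + 1) = m - ((q : ℕ) + 1) + 1))]


lemma Bdet (m : ℕ) (hm : 1 ≤ m) (lam sg : ℝ) :
    Matrix.det (Matrix.of fun p q => Tm m lam p q + if (q : ℕ) = 0 then sg else 0) =
      (sg - 1 - lam) * ∏ r ∈ Finset.Icc 2 m, (-(r : ℝ) - lam) := by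
  set B : Matrix (Fin m) (Fin m) ℝ :=
    Matrix.of fun p q => Tm m lam p q + if (q : ℕ) = 0 then sg else 0 with hB
  rw [← det_updateColumn_rowsum m hm B]
  have hrs : (fun p => ∑ q, B p q) = fun _ : Fin m => (sg - 1 - lam) := by
    funext p
    simp only [hB, Matrix.of_apply]
    rw [Finset.sum_add_distrib, Tm_rowsum, sum_indicator_fin m 0 sg, if_pos (by omega)]
    ring
  rw [hrs]
  have hBU : B.updateCol ⟨0, hm⟩ (fun _ => sg - 1 - lam) =
      (Tm m lam).updateCol ⟨0, hm⟩ (fun _ => sg - 1 - lam) := by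
    ext p q
    rw [Matrix.updateCol_apply, Matrix.updateCol_apply]
    by_cases hq0 : q = ⟨0, hm⟩
    · rw [if_pos hq0, if_pos hq0]
    · rw [if_neg hq0, if_neg hq0]
      simp only [hB, Matrix.of_apply]
      rw [if_neg (fun h => hq0 (Fin.ext h)), add_zero]
  rw [hBU]
  have hsmul : (fun _ : Fin m => sg - 1 - lam) = (sg - 1 - lam) • (fun _ : Fin m => (1 : ℝ)) := by
    funext x; simp
  rw [hsmul, Matrix.det_updateCol_smul, TW m hm lam]
  have hrev : ((Wm m lam).submatrix Fin.rev Fin.rev).det = (Wm m lam).det := by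
    have hco : (Fin.rev : Fin m → Fin m) = ⇑(Fin.revPerm (n := m)) := by
      funext x; simp
    rw [hco]
    exact Matrix.det_submatrix_equiv_self Fin.revPerm (Wm m lam)
  rw [hrev, Wm_det m hm lam]

lemma Tdet (m : ℕ) (hm : 1 ≤ m) (lam : ℝ) :
    (Tm m lam).det = (-1 - lam) * ∏ r ∈ Finset.Icc 2 m, (-(r : ℝ) - lam) := by
  have h := Bdet m hm lam 0
  have heq : (Matrix.of fun p q => Tm m lam p q + if (q : ℕ) = 0 then (0 : ℝ) else 0) =
      Tm m lam := by
    ext p q; simp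
  rw [heq] at h
  rw [h]; ring

lemma Mentry (m k : ℕ) (i : Fin k) (n : Fin k → ℕ) (lam : ℝ) (x y : Fin m × Fin k) :
    (hookA m k i n - lam • (1 : Matrix (Fin m × Fin k) (Fin m × Fin k) ℝ)) x y =
      (if (y.1 : ℕ) = 0 then (m : ℝ) * n y.2 - (if y.2 = i then (m : ℝ) else 0) else 0) +
      Tm m lam x.1 y.1 * (if x.2 = y.2 then 1 else 0) := by
  obtain ⟨p, a⟩ := x
  obtain ⟨q, b⟩ := y
  simp only [Matrix.sub_apply, Matrix.smul_apply, smul_eq_mul, Matrix.one_apply,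
    hookA, hookH, Tm, Prod.mk.injEq, Fin.ext_iff, ne_eq]
  split_ifs
  all_goals try ring
  all_goals try (exfalso; omega)
  all_goals
    (have hp0 : (p : ℕ) = 0 := by omega
     rw [show ((p : ℕ) : ℝ) = 0 by exact_mod_cast hp0]
     ring)

end Aux

/-- The characteristic polynomial of the `mk×mk` replacement matrix `A` factors as
`(-1-λ)^(k-1) (mτ₀ - m - 1 - λ) ∏_{r=2}^m (-r-λ)^k`; hence its eigenvalues are
`mτ₀ - m - 1` (simple), `-1` with multiplicity `k-1`, and `-r` with multiplicity `k`
for each `r = 2, ..., m`. -/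
theorem stmt11 (m k : ℕ) (hm : 1 ≤ m) (hk : 1 ≤ k) (i : Fin k)
    (n : Fin k → ℕ) (hn : ∀ j, 0 < n j) (τ0 : ℕ) (hτ : τ0 = ∑ j, n j)
    (lam : ℝ) :
    Matrix.det (hookA m k i n - lam • (1 : Matrix (Fin m × Fin k) (Fin m × Fin k) ℝ)) =
      (-1 - lam) ^ (k - 1) * ((m : ℝ) * τ0 - m - 1 - lam) *
        ∏ r ∈ Finset.Icc 2 m, (-(r : ℝ) - lam) ^ k := by
  classical
  set v : Fin k → ℝ := fun b => (m : ℝ) * n b - (if b = i then (m : ℝ) else 0) with hv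
  set sg : ℝ := (m : ℝ) * τ0 - m with hsg
  set Mb : Matrix (Fin m × Fin k) (Fin m × Fin k) ℝ :=
    hookA m k i n - lam • (1 : Matrix (Fin m × Fin k) (Fin m × Fin k) ℝ) with hMb
  have hMent : ∀ x y, Mb x y =
      (if (y.1 : ℕ) = 0 then v y.2 else 0) +
      Tm m lam x.1 y.1 * (if x.2 = y.2 then 1 else 0) := by
    intro x y
    rw [hMb, Mentry m k i n lam x y]
  have hvsum : ∑ b, v b = sg := by
    simp only [hv]
    rw [Finset.sum_sub_distrib, Finset.sum_ite_eq' Finset.univ i (fun _ => (m : ℝ)),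
      if_pos (Finset.mem_univ i), ← Finset.mul_sum]
    have hcast : (∑ b : Fin k, ((n b : ℝ))) = (τ0 : ℝ) := by
      rw [hτ]; push_cast; rfl
    rw [hcast, hsg]
  by_cases hs0 : sg = 0
  · -- degenerate case : τ0 = 1, k = 1
    have hmne : (m : ℝ) ≠ 0 := Nat.cast_ne_zero.mpr (by omega)
    have hτ1 : τ0 = 1 := by
      have h1 : (m : ℝ) * τ0 = (m : ℝ) * 1 := by rw [mul_one]; rw [hsg] at hs0; linarith
      have := mul_left_cancel₀ hmne h1
      exact_mod_cast this
    have hsum1 : ∑ j, n j = 1 := by rw [← hτ, hτ1]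
    have hk1 : k = 1 := by
      have h1 : k ≤ ∑ j, n j := by
        calc k = ∑ _j : Fin k, 1 := by simp
        _ ≤ ∑ j, n j := Finset.sum_le_sum (fun j _ => hn j)
      omega
    subst hk1
    have hni : n i = 1 := by
      have hb0 : ∑ j : Fin 1, n j = n i := by
        rw [show i = (0 : Fin 1) from Subsingleton.elim i 0, Fin.sum_univ_one]
      omega
    have hv0 : ∀ b : Fin 1, v b = 0 := by
      intro b
      have hbi : b = i := Subsingleton.elim b i
      simp [hv, hbi, hni]
    set e : Fin m ≃ Fin m × Fin 1 := (Equiv.prodUnique (Fin m) (Fin 1)).symm with he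
    have hsub : Mb.submatrix ⇑e ⇑e = Tm m lam := by
      ext p q
      rw [Matrix.submatrix_apply, hMent]
      have h1 : (e p).2 = (e q).2 := Subsingleton.elim _ _
      have h2 : (e q).1 = q := rfl
      have h3 : (e p).1 = p := rfl
      rw [h1, h2, h3, if_pos rfl, hv0, mul_one]
      simp
    have hdet : Mb.det = (Tm m lam).det := by
      rw [← Matrix.det_submatrix_equiv_self e Mb, hsub]
    rw [hdet, Tdet m hm lam, hs0]
    simp only [pow_one]
    norm_num
  · -- main case
    set z0 : Fin k := ⟨0, hk⟩ with hz0
    have hz0v : ((z0 : Fin k) : ℕ) = 0 := rfl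
    set S : Matrix (Fin k) (Fin k) ℝ := Matrix.of fun a b =>
      if (a : ℕ) = 0 then v b
      else (if a = b then (1 : ℝ) else 0) - (if (b : ℕ) = 0 then 1 else 0) with hS
    set S' : Matrix (Fin k) (Fin k) ℝ := Matrix.of fun a b =>
      if (b : ℕ) = 0 then (1 : ℝ)
      else (if a = b then sg else 0) - v b with hS'
    have f1 : ∀ a : Fin k, ∑ b, S a b = if (a : ℕ) = 0 then sg else 0 := by
      intro a
      by_cases ha : (a : ℕ) = 0
      · rw [if_pos ha]
        simp only [hS, Matrix.of_apply, ha, if_true]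
        exact hvsum
      · rw [if_neg ha]
        simp only [hS, Matrix.of_apply, ha, if_false]
        rw [Finset.sum_sub_distrib, Finset.sum_ite_eq Finset.univ a (fun _ => (1 : ℝ)),
          if_pos (Finset.mem_univ a), sum_indicator_fin k 0 1, if_pos (by omega)]
        ring
    have f2 : ∀ c : Fin k, ∑ b, v b * S' b c = if (c : ℕ) = 0 then sg else 0 := by
      intro c
      by_cases hc : (c : ℕ) = 0
      · rw [if_pos hc]
        simp only [hS', Matrix.of_apply, hc, if_true, mul_one]
        exact hvsum
      · rw [if_neg hc]
        simp only [hS', Matrix.of_apply, hc, if_false]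
        have : ∀ b : Fin k, v b * ((if b = c then sg else 0) - v c) =
            (if b = c then v b * sg else 0) - v b * v c := by
          intro b
          by_cases hb : b = c
          · rw [if_pos hb, if_pos hb]; ring
          · rw [if_neg hb, if_neg hb]; ring
        rw [Finset.sum_congr rfl fun b _ => this b, Finset.sum_sub_distrib,
          Finset.sum_ite_eq' Finset.univ c (fun b => v b * sg), if_pos (Finset.mem_univ c),
          ← Finset.sum_mul, hvsum]
        ring
    have f3 : ∀ a c : Fin k, ∑ b, S a b * S' b c = if a = c then sg else 0 := by
      intro a c
      by_cases ha : (a : ℕ) = 0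
      · have hSa : ∀ b, S a b = v b := by
          intro b; simp only [hS, Matrix.of_apply, ha, if_true]
        rw [Finset.sum_congr rfl fun b _ => by rw [hSa b], f2 c]
        by_cases hc : (c : ℕ) = 0
        · rw [if_pos hc, if_pos (Fin.ext (by omega))]
        · rw [if_neg hc, if_neg (fun h => hc (by rw [← h]; omega))]
      · have hSa : ∀ b, S a b = (if a = b then (1 : ℝ) else 0) - (if b = z0 then 1 else 0) := by
          intro b
          simp only [hS, Matrix.of_apply, ha, if_false]
          congr 1
          by_cases hb : (b : ℕ) = 0
          · rw [if_pos hb, if_pos (Fin.ext (by omega))]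
          · rw [if_neg hb, if_neg (fun h => hb (by rw [h]))]
        have hexp : ∀ b, S a b * S' b c =
            (if a = b then S' b c else 0) - (if b = z0 then S' b c else 0) := by
          intro b
          rw [hSa b, sub_mul, ite_mul, ite_mul, one_mul, zero_mul]
        rw [Finset.sum_congr rfl fun b _ => hexp b, Finset.sum_sub_distrib,
          Finset.sum_ite_eq Finset.univ a (fun b => S' b c), if_pos (Finset.mem_univ a),
          Finset.sum_ite_eq' Finset.univ z0 (fun b => S' b c), if_pos (Finset.mem_univ z0)]
        by_cases hc : (c : ℕ) = 0
        · simp only [hS', Matrix.of_apply, hc, if_true]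
          rw [if_neg (fun h : a = c => ha (by simp only [h]; omega))]
          ring
        · simp only [hS', Matrix.of_apply, hc, if_false]
          rw [if_neg (show ¬(z0 = c) from fun h => hc (h ▸ hz0v))]
          by_cases hac : a = c
          · rw [if_pos hac]; ring
          · rw [if_neg hac]; ring
    have f4 : S.det = sg := by
      rw [← det_updateColumn_rowsum k hk S]
      have hrs : (fun p => ∑ q, S p q) = fun p : Fin k => if (p : ℕ) = 0 then sg else 0 :=
        funext f1
      rw [hrs]
      have htri : (S.updateCol ⟨0, hk⟩ (fun p : Fin k => if (p : ℕ) = 0 then sg else 0)).BlockTriangular id := by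
        intro a b hab
        have hab' : (b : ℕ) < (a : ℕ) := hab
        rw [Matrix.updateCol_apply]
        by_cases hbz : b = ⟨0, hk⟩
        · rw [if_pos hbz, if_neg (by subst hbz; omega)]
        · rw [if_neg hbz]
          have hb0 : (b : ℕ) ≠ 0 := fun h => hbz (Fin.ext h)
          simp only [hS, Matrix.of_apply]
          rw [if_neg (by omega), if_neg (fun h : a = b => by subst h; omega), if_neg hb0]
          ring
      rw [Matrix.det_of_upperTriangular htri]
      rw [Finset.prod_eq_single z0 ?_ ?_]
      · rw [Matrix.updateCol_apply, if_pos hz0, if_pos hz0v]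
      · intro b _ hbz
        have hb0 : (b : ℕ) ≠ 0 := fun h => hbz (Fin.ext h)
        rw [Matrix.updateCol_apply, if_neg (fun h : b = ⟨0, hk⟩ => hb0 (by rw [h]))]
        simp only [hS, Matrix.of_apply]
        rw [if_neg hb0]
        simp [hb0]
      · intro h
        exact absurd (Finset.mem_univ z0) h
    have f5 : S * S' = sg • (1 : Matrix (Fin k) (Fin k) ℝ) := by
      ext a c
      rw [Matrix.mul_apply, f3 a c, Matrix.smul_apply, Matrix.one_apply, smul_eq_mul]
      by_cases hac : a = c
      · rw [if_pos hac, if_pos hac, mul_one]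
      · rw [if_neg hac, if_neg hac, mul_zero]
    have f6 : S'.det = sg ^ (k - 1) := by
      have hd := congrArg Matrix.det f5
      rw [Matrix.det_mul, f4, Matrix.det_smul, Matrix.det_one, mul_one,
        Fintype.card_fin] at hd
      have hpow : sg ^ k = sg * sg ^ (k - 1) := by
        conv_lhs => rw [show k = 1 + (k - 1) by omega]
        rw [pow_add, pow_one]
      rw [hpow] at hd
      exact mul_left_cancel₀ hs0 hd
    -- big matrices
    set G : Matrix (Fin m × Fin k) (Fin m × Fin k) ℝ :=
      Matrix.of fun x y => if x.1 = y.1 then S x.2 y.2 else 0 with hG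
    set G' : Matrix (Fin m × Fin k) (Fin m × Fin k) ℝ :=
      Matrix.of fun x y => if x.1 = y.1 then S' x.2 y.2 else 0 with hG'
    set Bm : Matrix (Fin m) (Fin m) ℝ :=
      Matrix.of fun p q => Tm m lam p q + if (q : ℕ) = 0 then sg else 0 with hBm
    set BDN : Matrix (Fin m × Fin k) (Fin m × Fin k) ℝ :=
      Matrix.blockDiagonal (fun b : Fin k => if (b : ℕ) = 0 then Bm else Tm m lam) with hBDN
    have hGM : ∀ x z, (G * Mb) x z =
        (if (z.1 : ℕ) = 0 then (if (x.2 : ℕ) = 0 then sg else 0) * v z.2 else 0) +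
        Tm m lam x.1 z.1 * S x.2 z.2 := by
      intro x z
      rw [Matrix.mul_apply, Fintype.sum_prod_type]
      have hstep : ∀ w1 : Fin m, ∑ w2 : Fin k, G x (w1, w2) * Mb (w1, w2) z =
          if x.1 = w1 then ∑ w2 : Fin k, S x.2 w2 * Mb (w1, w2) z else 0 := by
        intro w1
        by_cases hw : x.1 = w1
        · rw [if_pos hw]
          apply Finset.sum_congr rfl
          intro w2 _
          simp only [hG, Matrix.of_apply, hw, if_true]
        · rw [if_neg hw]
          apply Finset.sum_eq_zero
          intro w2 _
          simp only [hG, Matrix.of_apply, hw, if_false, zero_mul]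
      rw [Finset.sum_congr rfl fun w1 _ => hstep w1,
        Finset.sum_ite_eq Finset.univ x.1 _, if_pos (Finset.mem_univ x.1)]
      have hterm : ∀ w2 : Fin k, S x.2 w2 * Mb (x.1, w2) z =
          (if (z.1 : ℕ) = 0 then S x.2 w2 * v z.2 else 0) +
          (if w2 = z.2 then Tm m lam x.1 z.1 * S x.2 w2 else 0) := by
        intro w2
        rw [hMent]
        by_cases h1 : (z.1 : ℕ) = 0 <;> by_cases h2 : w2 = z.2 <;>
          simp [h1, h2] <;> ring
      rw [Finset.sum_congr rfl fun w2 _ => hterm w2, Finset.sum_add_distrib]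
      congr 1
      · by_cases h1 : (z.1 : ℕ) = 0
        · simp only [h1, if_true]
          rw [← Finset.sum_mul]
          by_cases hx2 : (x.2 : ℕ) = 0
          · rw [if_pos hx2]
            have : ∀ b, S x.2 b = v b := by
              intro b; simp only [hS, Matrix.of_apply, hx2, if_true]
            rw [Finset.sum_congr rfl fun b _ => this b, hvsum]
          · rw [if_neg hx2, zero_mul]
            have := f1 x.2
            rw [if_neg hx2] at this
            rw [this, zero_mul]
        · simp only [h1, if_false]
          exact Finset.sum_const_zero
      · rw [Finset.sum_ite_eq' Finset.univ z.2 _, if_pos (Finset.mem_univ z.2)]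
    have key : G * Mb * G' = sg • BDN := by
      ext x y
      rw [Matrix.mul_apply, Fintype.sum_prod_type]
      have hstep : ∀ q1 : Fin m, ∑ c1 : Fin k, (G * Mb) x (q1, c1) * G' (q1, c1) y =
          if q1 = y.1 then ∑ c1 : Fin k, (G * Mb) x (q1, c1) * S' c1 y.2 else 0 := by
        intro q1
        by_cases hw : q1 = y.1
        · rw [if_pos hw]
          apply Finset.sum_congr rfl
          intro c1 _
          simp only [hG', Matrix.of_apply, hw, if_true]
        · rw [if_neg hw]
          apply Finset.sum_eq_zero
          intro c1 _
          simp only [hG', Matrix.of_apply, hw, if_false, mul_zero]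
      rw [Finset.sum_congr rfl fun q1 _ => hstep q1,
        Finset.sum_ite_eq' Finset.univ y.1 _, if_pos (Finset.mem_univ y.1)]
      have hterm : ∀ c1 : Fin k, (G * Mb) x (y.1, c1) * S' c1 y.2 =
          (if (y.1 : ℕ) = 0 then (if (x.2 : ℕ) = 0 then sg else 0) * (v c1 * S' c1 y.2) else 0) +
          Tm m lam x.1 y.1 * (S x.2 c1 * S' c1 y.2) := by
        intro c1
        rw [hGM, add_mul]
        congr 1
        · rw [ite_mul, zero_mul]
          by_cases h1 : (y.1 : ℕ) = 0
          · rw [if_pos h1, if_pos h1, mul_assoc]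
          · rw [if_neg h1, if_neg h1]
        · rw [mul_assoc]
      rw [Finset.sum_congr rfl fun c1 _ => hterm c1, Finset.sum_add_distrib]
      have hsum1 : (∑ c1 : Fin k, if (y.1 : ℕ) = 0 then
          (if (x.2 : ℕ) = 0 then sg else 0) * (v c1 * S' c1 y.2) else 0) =
          if (y.1 : ℕ) = 0 then (if (x.2 : ℕ) = 0 then sg else 0) *
            (if ((y.2 : Fin k) : ℕ) = 0 then sg else 0) else 0 := by
        by_cases h1 : (y.1 : ℕ) = 0
        · simp only [h1, if_true]
          rw [← Finset.mul_sum, f2]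
        · simp only [h1, if_false]
          exact Finset.sum_const_zero
      have hsum2 : (∑ c1 : Fin k, Tm m lam x.1 y.1 * (S x.2 c1 * S' c1 y.2)) =
          Tm m lam x.1 y.1 * (if x.2 = y.2 then sg else 0) := by
        rw [← Finset.mul_sum, f3]
      rw [hsum1, hsum2]
      -- now compare with RHS
      rw [Matrix.smul_apply, hBDN, Matrix.blockDiagonal_apply]
      by_cases hxy : x.2 = y.2
      · conv_rhs => rw [if_pos hxy]
        rw [if_pos hxy]
        by_cases hx2 : (x.2 : ℕ) = 0
        · have hy2 : ((y.2 : Fin k) : ℕ) = 0 := by rw [← hxy]; exact hx2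
          rw [if_pos hx2, if_pos hx2, if_pos hy2]
          simp only [hBm, Matrix.of_apply]
          by_cases h1 : (y.1 : ℕ) = 0
          · rw [if_pos h1, if_pos h1]
            simp [smul_eq_mul]; ring
          · rw [if_neg h1, if_neg h1]
            simp [smul_eq_mul]; ring
        · have hy2 : ¬((y.2 : Fin k) : ℕ) = 0 := by rw [← hxy]; exact hx2
          rw [if_neg hx2, if_neg hx2]
          by_cases h1 : (y.1 : ℕ) = 0
          · rw [if_pos h1]
            simp [smul_eq_mul]; ring
          · rw [if_neg h1]
            simp [smul_eq_mul]; ring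
      · conv_rhs => rw [if_neg hxy]
        rw [if_neg hxy, mul_zero, smul_zero]
        by_cases h1 : (y.1 : ℕ) = 0
        · rw [if_pos h1]
          by_cases hx2 : (x.2 : ℕ) = 0
          · have hy2 : ¬((y.2 : Fin k) : ℕ) = 0 := by
              intro h; exact hxy (Fin.ext (by omega))
            rw [if_pos hx2, if_neg hy2]
            ring
          · rw [if_neg hx2]
            ring
        · rw [if_neg h1]
          ring
    -- determinants of G and G'
    have hGdet : G.det = sg ^ m := by
      have hGeq : G = (Matrix.blockDiagonal (fun _ : Fin m => S)).submatrix
          ⇑(Equiv.prodComm (Fin m) (Fin k)) ⇑(Equiv.prodComm (Fin m) (Fin k)) := by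
        ext x y
        rw [Matrix.submatrix_apply, Matrix.blockDiagonal_apply]
        simp only [hG, Matrix.of_apply, Equiv.prodComm_apply, Prod.snd_swap, Prod.fst_swap]
        exact if_congr Iff.rfl rfl rfl
      rw [hGeq, Matrix.det_submatrix_equiv_self, Matrix.det_blockDiagonal,
        Finset.prod_const, Finset.card_univ, Fintype.card_fin, f4]
    have hG'det : G'.det = (sg ^ (k - 1)) ^ m := by
      have hGeq : G' = (Matrix.blockDiagonal (fun _ : Fin m => S')).submatrix
          ⇑(Equiv.prodComm (Fin m) (Fin k)) ⇑(Equiv.prodComm (Fin m) (Fin k)) := by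
        ext x y
        rw [Matrix.submatrix_apply, Matrix.blockDiagonal_apply]
        simp only [hG', Matrix.of_apply, Equiv.prodComm_apply, Prod.snd_swap, Prod.fst_swap]
        exact if_congr Iff.rfl rfl rfl
      rw [hGeq, Matrix.det_submatrix_equiv_self, Matrix.det_blockDiagonal,
        Finset.prod_const, Finset.card_univ, Fintype.card_fin, f6]
    -- determinant of BDN
    have hBDNdet : BDN.det = Bm.det * (Tm m lam).det ^ (k - 1) := by
      rw [hBDN, Matrix.det_blockDiagonal]
      have hite : ∀ b : Fin k, (if (b : ℕ) = 0 then Bm else Tm m lam).det =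
          if b = z0 then Bm.det else (Tm m lam).det := by
        intro b
        by_cases hb : (b : ℕ) = 0
        · rw [if_pos hb, if_pos (Fin.ext (by omega))]
        · rw [if_neg hb, if_neg (fun h => hb (by rw [h]))]
      rw [Finset.prod_congr rfl fun b _ => hite b]
      rw [← Finset.mul_prod_erase Finset.univ _ (Finset.mem_univ z0), if_pos rfl]
      congr 1
      rw [Finset.prod_congr rfl (fun b hb => if_neg (Finset.ne_of_mem_erase hb)),
        Finset.prod_const, Finset.card_erase_of_mem (Finset.mem_univ z0),
        Finset.card_univ, Fintype.card_fin]
    -- put it together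
    have hdetE : sg ^ m * Mb.det * (sg ^ (k - 1)) ^ m =
        sg ^ (m * k) * (Bm.det * (Tm m lam).det ^ (k - 1)) := by
      have h1 : (G * Mb * G').det = G.det * Mb.det * G'.det := by
        rw [Matrix.det_mul, Matrix.det_mul]
      rw [← hGdet, ← hG'det, ← h1, key, Matrix.det_smul, hBDNdet]
      congr 2
      rw [Fintype.card_prod, Fintype.card_fin, Fintype.card_fin]
    have hpowmk : sg ^ m * (sg ^ (k - 1)) ^ m = sg ^ (m * k) := by
      rw [← pow_mul, ← pow_add]
      congr 1
      obtain ⟨k', rfl⟩ : ∃ k', k = k' + 1 := ⟨k - 1, by omega⟩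
      simp [Nat.mul_succ, Nat.succ_sub_one]
      ring
    have hMbdet : Mb.det = Bm.det * (Tm m lam).det ^ (k - 1) := by
      apply mul_left_cancel₀ (pow_ne_zero (m * k) hs0)
      calc sg ^ (m * k) * Mb.det = sg ^ m * Mb.det * (sg ^ (k - 1)) ^ m := by
            rw [← hpowmk]; ring
        _ = sg ^ (m * k) * (Bm.det * (Tm m lam).det ^ (k - 1)) := hdetE
    rw [hMbdet, show Bm.det = (sg - 1 - lam) * ∏ r ∈ Finset.Icc 2 m, (-(r : ℝ) - lam)
        from Bdet m hm lam sg, Tdet m hm lam]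
    rw [Finset.prod_pow]
    rw [mul_pow]
    have hPP : (∏ r ∈ Finset.Icc 2 m, (-(r : ℝ) - lam)) ^ (k - 1) *
        (∏ r ∈ Finset.Icc 2 m, (-(r : ℝ) - lam)) =
        (∏ r ∈ Finset.Icc 2 m, (-(r : ℝ) - lam)) ^ k := by
      rw [← pow_succ]
      congr 1
      omega
    calc (sg - 1 - lam) * (∏ r ∈ Finset.Icc 2 m, (-(r : ℝ) - lam)) *
          ((-1 - lam) ^ (k - 1) * (∏ r ∈ Finset.Icc 2 m, (-(r : ℝ) - lam)) ^ (k - 1)) =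
        (-1 - lam) ^ (k - 1) * (sg - 1 - lam) *
          ((∏ r ∈ Finset.Icc 2 m, (-(r : ℝ) - lam)) ^ (k - 1) *
            (∏ r ∈ Finset.Icc 2 m, (-(r : ℝ) - lam))) := by ring
      _ = (-1 - lam) ^ (k - 1) * (sg - 1 - lam) *
            (∏ r ∈ Finset.Icc 2 m, (-(r : ℝ) - lam)) ^ k := by rw [hPP]
end

section
/- For the mk×mk replacement matrix A above, if v₁ = (y₁; y₂; ...; y_m) (stacked k-vectors) is an eigenvector of Aᵀ for λ₁ = mτ₀ - m - 1, then y_r = ((m-1)_{r-1} / (mτ₀-2)_{r-1}) · y₁ for all r = 1, ..., m, where (x)_j denotes the falling factorial x(x-1)···(x-j+1). -/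
open Matrix

/-- If `v₁ = (y₁; ...; y_m)` is an eigenvector of `Aᵀ` for `λ₁ = mτ₀ - m - 1`, then
the segments satisfy `y_r = ((m-1)_{r-1}/(mτ₀-2)_{r-1}) y₁`, where `(x)_j` is a
falling factorial (written here as `∏_{j<r-1} (x - j)` with 0-indexed block rows). -/
theorem stmt12 (m k : ℕ) (hm : 0 < m) (hk : 0 < k) (i : Fin k)
    (n : Fin k → ℕ) (hn : ∀ j, 0 < n j) (τ0 : ℕ) (hτ : τ0 = ∑ j, n j) (hτ2 : 2 ≤ τ0)
    (v : Fin m × Fin k → ℝ)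
    (hv : (hookA m k i n)ᵀ *ᵥ v = ((m : ℝ) * τ0 - m - 1) • v) :
    ∀ (p : Fin m) (a : Fin k),
      v (p, a) =
        ((∏ j ∈ Finset.range (p : ℕ), ((m : ℝ) - 1 - j)) /
            (∏ j ∈ Finset.range (p : ℕ), ((m : ℝ) * τ0 - 2 - j))) * v (⟨0, hm⟩, a) := by
  -- key recurrence
  have key : ∀ (q : ℕ) (hq : q + 1 < m) (a : Fin k),
      ((m : ℝ) * τ0 - 2 - q) * v (⟨q + 1, hq⟩, a)
        = ((m : ℝ) - 1 - q) * v (⟨q, Nat.lt_of_succ_lt hq⟩, a) := by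
    intro q hq a
    have h1 := congrFun hv (⟨q + 1, hq⟩, a)
    simp only [mulVec, dotProduct, transpose_apply, Pi.smul_apply, smul_eq_mul] at h1
    have hq' : q < m := Nat.lt_of_succ_lt hq
    rw [Fintype.sum_eq_add (⟨⟨q + 1, hq⟩, a⟩ : Fin m × Fin k)
        (⟨⟨q, hq'⟩, a⟩ : Fin m × Fin k)
        (by simp [Prod.ext_iff, Fin.ext_iff])
        (by
          rintro ⟨r, b⟩ hrb
          simp only [hookA, Fin.val_mk]
          rw [if_neg (Nat.succ_ne_zero q)]
          by_cases hr1 : (q + 1) = (r : ℕ)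
          · rw [if_pos hr1]
            have hb : ¬ b = a := by
              intro hba
              exact hrb.1 (by
                apply Prod.ext
                · exact Fin.ext hr1.symm
                · exact hba)
            rw [if_neg hb, zero_mul]
          · rw [if_neg hr1]
            by_cases hr2 : q + 1 = (r : ℕ) + 1
            · rw [if_pos hr2]
              have hb : ¬ b = a := by
                intro hba
                exact hrb.2 (by
                  apply Prod.ext
                  · exact Fin.ext (show (r : ℕ) = q by omega)
                  · exact hba)
              rw [if_neg hb, zero_mul]
            · rw [if_neg hr2, zero_mul])] at h1
    have e1 : hookA m k i n (⟨q + 1, hq⟩, a) (⟨q + 1, hq⟩, a)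
        = -((m : ℝ) - (q + 1)) := by
      norm_num [hookA]
    have e2 : hookA m k i n (⟨q, hq'⟩, a) (⟨q + 1, hq⟩, a) = (m : ℝ) - 1 - q := by
      norm_num [hookA]
    rw [e1, e2] at h1
    linear_combination -h1
  -- denominators are positive
  have hden : ∀ (j : ℕ), j + 2 ≤ m → (0 : ℝ) < (m : ℝ) * τ0 - 2 - j := by
    intro j hj
    have h1 : ((j : ℝ) + 2) ≤ (m : ℝ) := by exact_mod_cast hj
    have h2 : (2 : ℝ) ≤ (τ0 : ℝ) := by exact_mod_cast hτ2
    have h3 : (m : ℝ) * 2 ≤ (m : ℝ) * τ0 :=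
      mul_le_mul_of_nonneg_left h2 (by positivity)
    linarith
  -- main induction on the nat value
  have main : ∀ (q : ℕ) (hq : q < m) (a : Fin k),
      v (⟨q, hq⟩, a) =
        ((∏ j ∈ Finset.range q, ((m : ℝ) - 1 - j)) /
            (∏ j ∈ Finset.range q, ((m : ℝ) * τ0 - 2 - j))) * v (⟨0, hm⟩, a) := by
    intro q
    induction q with
    | zero => intro hq a; simp
    | succ q ih =>
      intro hq a
      have hq' : q < m := Nat.lt_of_succ_lt hq
      have hrec := key q hq a
      have hden' : ((m : ℝ) * τ0 - 2 - q) ≠ 0 := by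
        have := hden q (by omega); linarith
      have hprod : (∏ j ∈ Finset.range q, ((m : ℝ) * τ0 - 2 - j)) ≠ 0 := by
        apply Finset.prod_ne_zero_iff.2
        intro j hj
        have hjq : j < q := Finset.mem_range.1 hj
        have := hden j (by omega); linarith
      have step : v (⟨q + 1, hq⟩, a)
          = (((m : ℝ) - 1 - q) / ((m : ℝ) * τ0 - 2 - q)) * v (⟨q, hq'⟩, a) := by
        field_simp
        linarith [hrec]
      rw [step, ih hq' a, Finset.prod_range_succ, Finset.prod_range_succ]
      field_simp
  intro p a
  have := main (p : ℕ) p.isLt a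
  simpa using this
end

section
/- The vector v₁ ∈ ℝ^{mk} whose r-th k-segment is ((m-1)_{r-1}/(mτ₀-2)_{r-1}) · y₁, with y₁ = (m/(mτ₀-1))·(n_1, ..., n_{i-1}, n_i - 1, n_{i+1}, ..., n_k)ᵀ, satisfies Aᵀ v₁ = (mτ₀ - m - 1) v₁. -/
open Matrix

noncomputable def hookc (m τ0 : ℕ) (p : ℕ) : ℝ :=
  (∏ j ∈ Finset.range p, ((m : ℝ) - 1 - j)) /
    (∏ j ∈ Finset.range p, ((m : ℝ) * τ0 - 2 - j))

lemma hookc_zero (m τ0 : ℕ) : hookc m τ0 0 = 1 := by simp [hookc]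

lemma hookc_succ (m τ0 : ℕ) (hm : 1 ≤ m) (hτ2 : 2 ≤ τ0) (p : ℕ) (hp : p + 1 ≤ m) :
    hookc m τ0 (p + 1) * ((m : ℝ) * τ0 - 2 - p) = hookc m τ0 p * ((m : ℝ) - 1 - p) := by
  have hM : (1 : ℝ) ≤ m := by exact_mod_cast hm
  have hT : (2 : ℝ) ≤ τ0 := by exact_mod_cast hτ2
  by_cases h : p + 2 ≤ m
  · have hpc : (p : ℝ) + 2 ≤ m := by exact_mod_cast h
    have hpos : 0 < (m : ℝ) * τ0 - 2 - p := by nlinarith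
    rw [hookc, hookc, Finset.prod_range_succ, Finset.prod_range_succ,
      mul_div_mul_comm, mul_assoc, div_mul_cancel₀ _ hpos.ne']
  · have hpm : p + 1 = m := by omega
    have hpc : (p : ℝ) + 1 = m := by exact_mod_cast hpm
    have h0 : (m : ℝ) - 1 - p = 0 := by linarith
    simp [hookc, Finset.prod_range_succ, h0]

lemma hookc_top (m τ0 : ℕ) (hm : 1 ≤ m) : hookc m τ0 m = 0 := by
  have hmem : m - 1 ∈ Finset.range m := by simp; omega
  have h0 : (m : ℝ) - 1 - ((m - 1 : ℕ) : ℝ) = 0 := by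
    rw [Nat.cast_sub hm]; push_cast; ring
  rw [hookc, Finset.prod_eq_zero hmem h0, zero_div]

lemma hookc_sum (m τ0 : ℕ) (hm : 1 ≤ m) (hτ2 : 2 ≤ τ0) :
    (∑ p ∈ Finset.range m, hookc m τ0 p) * ((m : ℝ) * τ0 - m) = (m : ℝ) * τ0 - 1 := by
  set f : ℕ → ℝ := fun p => ((m : ℝ) * τ0 - 1 - p) * hookc m τ0 p with hf
  have key : ∀ p ∈ Finset.range m, hookc m τ0 p * ((m : ℝ) * τ0 - m)
      = f p - f (p + 1) := by
    intro p hp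
    have hp' : p + 1 ≤ m := Finset.mem_range.mp hp
    have h := hookc_succ m τ0 hm hτ2 p hp'
    simp only [hf]
    push_cast
    linarith [h]
  calc (∑ p ∈ Finset.range m, hookc m τ0 p) * ((m : ℝ) * τ0 - m)
      = ∑ p ∈ Finset.range m, hookc m τ0 p * ((m : ℝ) * τ0 - m) := by
        rw [Finset.sum_mul]
    _ = ∑ p ∈ Finset.range m, (f p - f (p + 1)) := Finset.sum_congr rfl key
    _ = f 0 - f m := Finset.sum_range_sub' f m
    _ = (m : ℝ) * τ0 - 1 := by
        simp [hf, hookc_zero, hookc_top m τ0 hm]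

lemma hookc_rec (m τ0 : ℕ) (hm : 1 ≤ m) (hτ2 : 2 ≤ τ0) (q : ℕ) (h1 : 1 ≤ q) (h2 : q < m) :
    ((m : ℝ) - q) * (hookc m τ0 (q - 1) - hookc m τ0 q)
      = ((m : ℝ) * τ0 - m - 1) * hookc m τ0 q := by
  have h := hookc_succ m τ0 hm hτ2 (q - 1) (by omega)
  rw [Nat.sub_add_cancel h1] at h
  have hc : ((q - 1 : ℕ) : ℝ) = (q : ℝ) - 1 := by
    rw [Nat.cast_sub h1]; push_cast; ring
  rw [hc] at h
  linarith [h]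


/-- The vector `v₁ ∈ ℝ^{mk}` whose `r`-th `k`-segment is
`((m-1)_{r-1}/(mτ₀-2)_{r-1}) y₁` with `y₁ = (m/(mτ₀-1))(n_1,...,n_i - 1,...,n_k)ᵀ`
satisfies `Aᵀ v₁ = (mτ₀ - m - 1) v₁`. -/
theorem stmt13 (m k : ℕ) (hm : 0 < m) (hk : 0 < k) (i : Fin k)
    (n : Fin k → ℕ) (hn : ∀ j, 0 < n j) (τ0 : ℕ) (hτ : τ0 = ∑ j, n j) (hτ2 : 2 ≤ τ0)
    (v : Fin m × Fin k → ℝ)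
    (hv : ∀ (p : Fin m) (a : Fin k),
      v (p, a) =
        ((∏ j ∈ Finset.range (p : ℕ), ((m : ℝ) - 1 - j)) /
            (∏ j ∈ Finset.range (p : ℕ), ((m : ℝ) * τ0 - 2 - j))) *
          (((m : ℝ) / ((m : ℝ) * τ0 - 1)) * ((n a : ℝ) - if a = i then 1 else 0))) :
    (hookA m k i n)ᵀ *ᵥ v = ((m : ℝ) * τ0 - m - 1) • v := by
  have hM : (1 : ℝ) ≤ m := by exact_mod_cast hm
  have hT : (2 : ℝ) ≤ τ0 := by exact_mod_cast hτ2
  have hMT1 : (m : ℝ) * τ0 - 1 ≠ 0 := by nlinarith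
  set c : ℕ → ℝ := hookc m τ0 with hcdef
  set w : Fin k → ℝ :=
    fun a => ((m : ℝ) / ((m : ℝ) * τ0 - 1)) * ((n a : ℝ) - if a = i then 1 else 0) with hwdef
  have hv' : ∀ (p : Fin m) (a : Fin k), v (p, a) = c (p : ℕ) * w a := by
    intro p a
    rw [hv, hwdef, hcdef]
    rfl
  set S : ℝ := ∑ a, w a with hSdef
  set C : ℝ := ∑ p ∈ Finset.range m, c p with hCdef
  have hS : S * ((m : ℝ) * τ0 - 1) = (m : ℝ) * τ0 - m := by
    have hsum_n : (∑ a, (n a : ℝ)) = (τ0 : ℝ) := by rw [hτ]; push_cast; rfl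
    have hsum_i : (∑ a : Fin k, (if a = i then (1 : ℝ) else 0)) = 1 := by simp
    rw [hSdef, hwdef, ← Finset.mul_sum, Finset.sum_sub_distrib, hsum_n, hsum_i]
    field_simp
  have hC : C * ((m : ℝ) * τ0 - m) = (m : ℝ) * τ0 - 1 := hookc_sum m τ0 hm hτ2
  funext y
  obtain ⟨q, b⟩ := y
  simp only [Matrix.mulVec, dotProduct, Matrix.transpose_apply, Pi.smul_apply,
    smul_eq_mul]
  rw [Fintype.sum_prod_type, hv' q b]
  by_cases hq : (q : ℕ) = 0
  · -- first block-row of Aᵀ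
    have hwb : ((m : ℝ) * τ0 - 1) * w b = (m : ℝ) * (n b : ℝ) - (if b = i then (m : ℝ) else 0) := by
      rw [hwdef]
      by_cases h : b = i <;> simp only [h, if_true, if_false] <;> field_simp <;> ring
    have inner : ∀ p : Fin m, (∑ a, hookA m k i n (p, a) (q, b) * v (p, a))
        = c (p : ℕ) * (((m : ℝ) * (n b : ℝ) - (if b = i then (m : ℝ) else 0)) * S)
          - (if (p : ℕ) = 0 then (m : ℝ) * w b else 0) := by
      intro p
      have point : ∀ a : Fin k, hookA m k i n (p, a) (q, b) * v (p, a)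
          = c (p : ℕ) * (((m : ℝ) * (n b : ℝ) - (if b = i then (m : ℝ) else 0)) * w a)
            - (if b = a then (m : ℝ) * (c (p : ℕ) * w a) else 0)
            + (if a = b then (if (p : ℕ) ≠ 0 then (m : ℝ) * (c (p : ℕ) * w a) else 0) else 0) := by
        intro a
        rw [hv']
        simp only [hookA, hookH, hq, if_true]
        by_cases h1 : a = b
        · subst h1
          by_cases h2 : (p : ℕ) = 0 <;> simp [h2] <;> ring
        · have h1' : ¬ b = a := fun h => h1 h.symm
          by_cases h2 : (p : ℕ) = 0 <;> simp [h1, h1', h2] <;> ring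
      rw [Finset.sum_congr rfl (fun a _ => point a), Finset.sum_add_distrib,
        Finset.sum_sub_distrib, Finset.sum_ite_eq, Finset.sum_ite_eq',
        ← Finset.mul_sum, ← Finset.mul_sum, ← hSdef]
      simp only [Finset.mem_univ, if_true]
      by_cases h2 : (p : ℕ) = 0
      · rw [h2]
        simp [hcdef, hookc_zero]
      · simp [h2]
    rw [Finset.sum_congr rfl (fun p _ => inner p)]
    rw [Fin.sum_univ_eq_sum_range
      (fun p => c p * (((m : ℝ) * (n b : ℝ) - (if b = i then (m : ℝ) else 0)) * S)
        - (if p = 0 then (m : ℝ) * w b else 0)) m]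
    rw [Finset.sum_sub_distrib, ← Finset.sum_mul, ← hCdef, Finset.sum_ite_eq']
    simp only [Finset.mem_range, hm, if_true]
    rw [hq, hcdef, hookc_zero]
    linear_combination (-(C * S)) * hwb + (C * w b) * hS + (w b) * hC
  · -- later block-rows
    have hq1 : 1 ≤ (q : ℕ) := by omega
    have hcast : (((q : ℕ) - 1 : ℕ) : ℝ) = ((q : ℕ) : ℝ) - 1 := by
      rw [Nat.cast_sub hq1]; push_cast; ring
    have inner : ∀ p : Fin m, (∑ a, hookA m k i n (p, a) (q, b) * v (p, a))
        = (if (p : ℕ) = (q : ℕ) then -((m : ℝ) - (q : ℕ)) * (c (q : ℕ) * w b) else 0)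
          + (if (p : ℕ) = (q : ℕ) - 1 then ((m : ℝ) - (q : ℕ)) * (c ((q : ℕ) - 1) * w b) else 0) := by
      intro p
      have point : ∀ a : Fin k, hookA m k i n (p, a) (q, b) * v (p, a)
          = if a = b then
              (if (q : ℕ) = (p : ℕ) then -((m : ℝ) - (p : ℕ))
               else if (q : ℕ) = (p : ℕ) + 1 then (m : ℝ) - 1 - (p : ℕ) else 0)
              * (c (p : ℕ) * w a)
            else 0 := by
        intro a
        rw [hv']
        simp only [hookA, hq, if_false]
        by_cases h1 : a = b <;> simp [h1]
      rw [Finset.sum_congr rfl (fun a _ => point a), Finset.sum_ite_eq']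
      simp only [Finset.mem_univ, if_true]
      by_cases hp1 : (q : ℕ) = (p : ℕ)
      · have hne : ¬ ((p : ℕ) = (q : ℕ) - 1) := by omega
        rw [if_pos hp1, if_pos hp1.symm, if_neg hne, ← hp1]
        ring
      · by_cases hp2 : (q : ℕ) = (p : ℕ) + 1
        · have he : (p : ℕ) = (q : ℕ) - 1 := by omega
          have hne : ¬ ((p : ℕ) = (q : ℕ)) := by omega
          rw [if_neg hp1, if_pos hp2, if_neg hne, if_pos he, he, hcast]
          ring
        · have hne : ¬ ((p : ℕ) = (q : ℕ)) := by omega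
          have hne' : ¬ ((p : ℕ) = (q : ℕ) - 1) := by omega
          rw [if_neg hp1, if_neg hp2, if_neg hne, if_neg hne']
          simp
    rw [Finset.sum_congr rfl (fun p _ => inner p)]
    rw [Fin.sum_univ_eq_sum_range
      (fun p => (if p = (q : ℕ) then -((m : ℝ) - (q : ℕ)) * (c (q : ℕ) * w b) else 0)
        + (if p = (q : ℕ) - 1 then ((m : ℝ) - (q : ℕ)) * (c ((q : ℕ) - 1) * w b) else 0)) m]
    rw [Finset.sum_add_distrib, Finset.sum_ite_eq', Finset.sum_ite_eq']
    have hqm : (q : ℕ) ∈ Finset.range m := by simp [q.isLt]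
    have hqm' : (q : ℕ) - 1 ∈ Finset.range m := by simp; omega
    rw [if_pos hqm, if_pos hqm']
    have hrec := hookc_rec m τ0 hm hτ2 (q : ℕ) hq1 q.isLt
    rw [← hcdef] at hrec
    linear_combination (w b) * hrec
end
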